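/- The 3×3 matrix with rows (1/2, 1/4, 1/4), (1/4, (3+√5)/8, (3−√5)/8), (1/4, (3−√5)/8, (3+√5)/8) is doubly stochastic and arises as the entrywise squared absolute values of some unitary 3×3 matrix. -/

import Mathlib

noncomputable def tmat : Matrix (Fin 3) (Fin 3) ℝ :=
  !![1/2, 1/4, 1/4;
     1/4, (3 + Real.sqrt 5)/8, (3 - Real.sqrt 5)/8;
     1/4, (3 - Real.sqrt 5)/8, (3 + Real.sqrt 5)/8]

/-!
The matrix of squared moduli of a unitary matrix is doubly stochastic, since its row and column
sums are the diagonal entries of `U Uᴴ` and `Uᴴ U`. So it suffices to exhibit a unitary `T` with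
`‖T i j‖ ^ 2 = tmat i j`. In the orthonormal basis `e₀, (e₁ + e₂)/√2, (e₁ - e₂)/√2` we take `T` to
be the real Hadamard block `!![c, c; c, -c]` (with `c = 1/√2`) on the first two vectors and a
phase `u` on the third; the moduli of the lower block then depend only on `re u`, which is tuned
to produce `(3 ± √5)/8`.
-/

open Matrix ComplexConjugate Real

theorem Matrix.norm_sq_mem_doublyStochastic_of_mem_unitaryGroup {𝕜 n : Type*} [RCLike 𝕜]
    [Fintype n] [DecidableEq n] {U : Matrix n n 𝕜} (hU : U ∈ unitaryGroup n 𝕜) :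
    (fun i j => ‖U i j‖ ^ 2 : Matrix n n ℝ) ∈ doublyStochastic ℝ n := by
  refine mem_doublyStochastic_iff_sum.2 ⟨fun i j => by positivity, fun i => ?_, fun j => ?_⟩
  · have h := congr_fun₂ (mem_unitaryGroup_iff.1 hU) i i
    simp only [mul_apply, star_apply, RCLike.star_def, RCLike.mul_conj, one_apply_eq] at h
    exact_mod_cast h
  · have h := congr_fun₂ (mem_unitaryGroup_iff'.1 hU) j j
    simp only [mul_apply, star_apply, RCLike.star_def, RCLike.conj_mul, one_apply_eq] at h
    exact_mod_cast h

noncomputable def phaseMatrix (c : ℝ) (u : ℂ) : Matrix (Fin 3) (Fin 3) ℂ :=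
  !![c, 1/2, 1/2;
     1/2, (u - c) / 2, (-u - c) / 2;
     1/2, (-u - c) / 2, (u - c) / 2]

lemma phaseMatrix_mem_unitaryGroup {c : ℝ} (hc : c ^ 2 = 1 / 2) {u : ℂ} (hu : ‖u‖ = 1) :
    phaseMatrix c u ∈ unitaryGroup (Fin 3) ℂ := by
  have hu_mul_conj : u * conj u = 1 := by
    rw [Complex.mul_conj, Complex.normSq_eq_norm_sq, hu]
    norm_num
  have hc_sq : (c : ℂ) ^ 2 = 1 / 2 := by
    rw [← Complex.ofReal_pow, hc]
    norm_num
  rw [mem_unitaryGroup_iff]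
  ext i j
  fin_cases i <;> fin_cases j <;>
    simp [phaseMatrix, mul_apply, Fin.sum_univ_three, map_ofNat] <;>
    grind

lemma norm_sq_sub_ofReal_div_two (u : ℂ) (c : ℝ) :
    ‖(u - c) / 2‖ ^ 2 = (‖u‖ ^ 2 - 2 * c * u.re + c ^ 2) / 4 := by
  rw [norm_div, div_pow, ← Complex.normSq_eq_norm_sq, Complex.normSq_sub, Complex.normSq_eq_norm_sq,
    Complex.normSq_ofReal, Complex.conj_ofReal, Complex.re_mul_ofReal, Complex.norm_two]
  ring

lemma norm_sq_phaseMatrix (c : ℝ) {u : ℂ} (hu : ‖u‖ = 1) :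
    (fun i j => ‖phaseMatrix c u i j‖ ^ 2 : Matrix (Fin 3) (Fin 3) ℝ) =
      !![c ^ 2, 1/4, 1/4;
         1/4, (1 - 2 * c * u.re + c ^ 2) / 4, (1 + 2 * c * u.re + c ^ 2) / 4;
         1/4, (1 + 2 * c * u.re + c ^ 2) / 4, (1 - 2 * c * u.re + c ^ 2) / 4] := by
  ext i j
  fin_cases i <;> fin_cases j <;>
    simp only [phaseMatrix, of_apply, Fin.zero_eta, Fin.mk_one, Fin.reduceFinMk, cons_val,
      cons_val_zero, cons_val_one, norm_sq_sub_ofReal_div_two, norm_neg, hu, Complex.neg_re] <;>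
    norm_num

noncomputable def tmatPhase : ℂ := ⟨-(√2 * √5) / 4, √2 * √3 / 4⟩

lemma norm_tmatPhase : ‖tmatPhase‖ = 1 := by
  have h : ‖tmatPhase‖ ^ 2 = 1 := by
    rw [← Complex.normSq_eq_norm_sq, Complex.normSq_apply]
    simp only [tmatPhase]
    ring_nf
    norm_num
  exact (pow_eq_one_iff_of_nonneg (norm_nonneg _) two_ne_zero).1 h

lemma tmat_eq_norm_sq_phaseMatrix :
    tmat = fun i j => ‖phaseMatrix (√2 / 2) tmatPhase i j‖ ^ 2 := by
  rw [norm_sq_phaseMatrix _ norm_tmatPhase]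
  ext i j
  fin_cases i <;> fin_cases j <;> simp [tmat, tmatPhase] <;> ring_nf <;> norm_num <;> ring

theorem stmt14 :
    (∀ i j, 0 ≤ tmat i j) ∧
    (∀ i, ∑ j, tmat i j = 1) ∧
    (∀ j, ∑ i, tmat i j = 1) ∧
    ∃ T : Matrix (Fin 3) (Fin 3) ℂ, T ∈ Matrix.unitaryGroup (Fin 3) ℂ ∧
      ∀ i j, ‖T i j‖ ^ 2 = tmat i j := by
  have hT : phaseMatrix (√2 / 2) tmatPhase ∈ unitaryGroup (Fin 3) ℂ :=
    phaseMatrix_mem_unitaryGroup (by norm_num [div_pow]) norm_tmatPhase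
  have hstoch : tmat ∈ doublyStochastic ℝ (Fin 3) := by
    rw [tmat_eq_norm_sq_phaseMatrix]
    exact norm_sq_mem_doublyStochastic_of_mem_unitaryGroup hT
  obtain ⟨hnonneg, hrow, hcol⟩ := mem_doublyStochastic_iff_sum.1 hstoch
  exact ⟨hnonneg, hrow, hcol, _, hT, fun i j => by rw [tmat_eq_norm_sq_phaseMatrix]⟩
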